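/- Supermartingale decomposition with irregular terminal value (abstract core of Proposition A.1): let χ and g be integrable 𝓕_T-measurable real random variables and let f : [0,T] × Ω → ℝ be jointly measurable with E[∫₀^T |f_r| dr] < ∞. Define, for s ∈ [0,T], ξ_s := E[ χ + ∫_s^T f_r dr | 𝓕_s ]·1_{s<T} + g·1_{s=T}. Then there exist two nonnegative supermartingales (H_s)_{s∈[0,T]} and (H'_s)_{s∈[0,T]} with respect to (𝓕_s) such that for every s ∈ [0,T], ξ_s = H_s − H'_s almost surely. -/

import Mathlib

/-! Decompose the data into nonnegative pieces: `f = f⁺ - f⁻`, `g = g⁺ - g⁻` and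
`χ = (χ⁺ + |g|) - (χ⁻ + |g|)`. For `f ≥ 0` and `0 ≤ g ≤ χ`, the process equal to
`E[χ + ∫_s^T f | 𝓕_s]` before `T` and to `g` at `T` is a nonnegative supermartingale:
`χ + ∫_s^T f` decreases in `s`, and stays above `g`, so the jump to the irregular terminal value
is downward. The padding by `|g|` is what puts `g⁺` and `g⁻` below the respective new `χ`s.
The decomposition of `ξ` follows by linearity of conditional expectation. -/

open MeasureTheory Filter Set

/-- The process `I_s := E[χ + ∫_s^T f_r dr | 𝓕_s]`. -/
noncomputable def runningCondExp {Ω : Type*} {m : MeasurableSpace Ω} (μ : Measure Ω)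
    (ℱ : Filtration ℝ m) (T : ℝ) (χ : Ω → ℝ) (f : ℝ → Ω → ℝ) (s : ℝ) : Ω → ℝ :=
  μ[fun ω => χ ω + ∫ r in s..T, f r ω | ℱ s]

/-- A nonnegative supermartingale on `[0,T]` with respect to the filtration `ℱ`:
each `M s` is `ℱ s`-measurable, integrable, nonnegative a.s., and
`E[M t | ℱ s] ≤ M s` a.s. for `0 ≤ s ≤ t ≤ T`. -/
def IsNonnegSupermartingaleOn {Ω : Type*} {m : MeasurableSpace Ω} (μ : Measure Ω)
    (ℱ : Filtration ℝ m) (T : ℝ) (M : ℝ → Ω → ℝ) : Prop :=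
  (∀ s ∈ Icc (0 : ℝ) T,
      StronglyMeasurable[ℱ s] (M s) ∧ Integrable (M s) μ ∧ (∀ᵐ ω ∂μ, 0 ≤ M s ω))
    ∧ ∀ s t : ℝ, 0 ≤ s → s ≤ t → t ≤ T → μ[M t | ℱ s] ≤ᵐ[μ] M s

open Function

section IntervalIntegral

variable {Ω : Type*} [MeasurableSpace Ω] {μ : Measure Ω} [SFinite μ] {φ : ℝ → Ω → ℝ}

lemma MeasureTheory.Integrable.integrable_setIntegral_uncurry {ν : Measure ℝ} [SFinite ν]
    (hφ : Integrable (uncurry φ) (ν.prod μ)) (I : Set ℝ) :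
    Integrable (fun ω => ∫ r in I, φ r ω ∂ν) μ := by
  have hrestrict : (ν.restrict I).prod μ = (ν.prod μ).restrict (I ×ˢ univ) := by
    rw [← Measure.prod_restrict, Measure.restrict_univ]
  exact (hrestrict ▸ hφ.restrict).integral_prod_right

variable {a b s t : ℝ}

lemma MeasureTheory.Integrable.integrable_intervalIntegral_uncurry
    (hφ : Integrable (uncurry φ) ((volume.restrict (Icc a b)).prod μ))
    (hs : s ∈ Icc a b) (ht : t ∈ Icc a b) :
    Integrable (fun ω => ∫ r in s..t, φ r ω) μ := by
  have hsub : ∀ {u v}, u ∈ Icc a b → v ∈ Icc a b → Ioc u v ⊆ Icc a b :=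
    fun hu hv => Ioc_subset_Icc_self.trans (Icc_subset_Icc hu.1 hv.2)
  change Integrable (fun ω => (∫ r in Ioc s t, φ r ω) - ∫ r in Ioc t s, φ r ω) μ
  rw [← Measure.restrict_restrict_of_subset (hsub hs ht),
    ← Measure.restrict_restrict_of_subset (hsub ht hs)]
  exact (hφ.integrable_setIntegral_uncurry _).sub (hφ.integrable_setIntegral_uncurry _)

lemma MeasureTheory.Integrable.ae_intervalIntegrable_uncurry
    (hφ : Integrable (uncurry φ) ((volume.restrict (Icc a b)).prod μ))
    (hs : s ∈ Icc a b) (ht : t ∈ Icc a b) :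
    ∀ᵐ ω ∂μ, IntervalIntegrable (fun r => φ r ω) volume s t := by
  filter_upwards [hφ.prod_left_ae] with ω hω
  exact (IntegrableOn.mono_set hω (uIcc_subset_Icc hs ht)).intervalIntegrable

end IntervalIntegral

section RunningCondExp

variable {Ω : Type*} {m : MeasurableSpace Ω} {μ : Measure Ω} {ℱ : Filtration ℝ m}
  {T s t : ℝ} {χ : Ω → ℝ} {f : ℝ → Ω → ℝ} {g : Ω → ℝ}

variable (μ ℱ T χ f g) in
noncomputable def runningCondExpWithTerminal : ℝ → Ω → ℝ :=
  fun s => if s < T then runningCondExp μ ℱ T χ f s else g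

lemma integrable_add_intervalIntegral [SFinite μ] (hχ : Integrable χ μ)
    (hf : Integrable (uncurry f) ((volume.restrict (Icc 0 T)).prod μ)) (hs : s ∈ Icc 0 T) :
    Integrable (fun ω => χ ω + ∫ r in s..T, f r ω) μ :=
  hχ.add (hf.integrable_intervalIntegral_uncurry hs ⟨hs.1.trans hs.2, le_rfl⟩)

lemma condExp_runningCondExp_le [IsFiniteMeasure μ] (hχ : Integrable χ μ)
    (hf0 : ∀ r ω, 0 ≤ f r ω) (hf : Integrable (uncurry f) ((volume.restrict (Icc 0 T)).prod μ))
    (hs : 0 ≤ s) (hst : s ≤ t) (htT : t ≤ T) :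
    μ[runningCondExp μ ℱ T χ f t | ℱ s] ≤ᵐ[μ] runningCondExp μ ℱ T χ f s := by
  have hsI : s ∈ Icc 0 T := ⟨hs, hst.trans htT⟩
  have hTI : T ∈ Icc 0 T := ⟨hsI.1.trans hsI.2, le_rfl⟩
  have hmono : (fun ω => χ ω + ∫ r in t..T, f r ω) ≤ᵐ[μ] fun ω => χ ω + ∫ r in s..T, f r ω := by
    filter_upwards [hf.ae_intervalIntegrable_uncurry hsI hTI] with ω hω
    exact add_le_add_right (intervalIntegral.integral_mono_interval hst htT le_rfl
      (Eventually.of_forall fun r => hf0 r ω) hω) _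
  calc μ[runningCondExp μ ℱ T χ f t | ℱ s]
      =ᵐ[μ] μ[fun ω => χ ω + ∫ r in t..T, f r ω | ℱ s] :=
        condExp_condExp_of_le (ℱ.mono hst) (ℱ.le t)
    _ ≤ᵐ[μ] runningCondExp μ ℱ T χ f s :=
        condExp_mono (integrable_add_intervalIntegral hχ hf ⟨hs.trans hst, htT⟩)
          (integrable_add_intervalIntegral hχ hf hsI) hmono

lemma isNonnegSupermartingaleOn_runningCondExpWithTerminal [IsFiniteMeasure μ]
    (hχ : Integrable χ μ) (hf0 : ∀ r ω, 0 ≤ f r ω)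
    (hf : Integrable (uncurry f) ((volume.restrict (Icc 0 T)).prod μ))
    (hgm : StronglyMeasurable[ℱ T] g) (hg : Integrable g μ) (hg0 : 0 ≤ g) (hgχ : g ≤ χ) :
    IsNonnegSupermartingaleOn μ ℱ T (runningCondExpWithTerminal μ ℱ T χ f g) := by
  have hgK : ∀ s ≤ T, g ≤ fun ω => χ ω + ∫ r in s..T, f r ω := fun s hsT ω =>
    le_add_of_le_of_nonneg (hgχ ω) (intervalIntegral.integral_nonneg hsT fun r _ => hf0 r ω)
  refine ⟨fun s hs => ?_, fun s t hs hst htT => ?_⟩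
  · rcases hs.2.lt_or_eq with hsT | rfl
    · simp only [runningCondExpWithTerminal, if_pos hsT]
      exact ⟨stronglyMeasurable_condExp, integrable_condExp,
        condExp_nonneg (Eventually.of_forall fun ω => (hg0 ω).trans (hgK s hs.2 ω))⟩
    · simp only [runningCondExpWithTerminal, lt_irrefl, if_false]
      exact ⟨hgm, hg, Eventually.of_forall hg0⟩
  · rcases htT.lt_or_eq with htT | rfl
    · simp only [runningCondExpWithTerminal, if_pos htT, if_pos (hst.trans_lt htT)]
      exact condExp_runningCondExp_le hχ hf0 hf hs hst htT.le
    · rcases hst.lt_or_eq with hsT | rfl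
      · simp only [runningCondExpWithTerminal, lt_irrefl, if_false, if_pos hsT]
        exact condExp_mono hg (integrable_add_intervalIntegral hχ hf ⟨hs, hst⟩)
          (Eventually.of_forall (hgK s hst))
      · simp only [runningCondExpWithTerminal, lt_irrefl, if_false]
        rw [condExp_of_stronglyMeasurable (ℱ.le s) hgm hg]

lemma runningCondExpWithTerminal_sub [SFinite μ] {χ₁ χ₂ g₁ g₂ : Ω → ℝ} {f₁ f₂ : ℝ → Ω → ℝ}
    (hχ₁ : Integrable χ₁ μ) (hχ₂ : Integrable χ₂ μ)
    (hf₁ : Integrable (uncurry f₁) ((volume.restrict (Icc 0 T)).prod μ))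
    (hf₂ : Integrable (uncurry f₂) ((volume.restrict (Icc 0 T)).prod μ)) (hs : s ∈ Icc 0 T) :
    runningCondExpWithTerminal μ ℱ T (χ₁ - χ₂) (f₁ - f₂) (g₁ - g₂) s =ᵐ[μ]
      runningCondExpWithTerminal μ ℱ T χ₁ f₁ g₁ s -
        runningCondExpWithTerminal μ ℱ T χ₂ f₂ g₂ s := by
  rcases hs.2.lt_or_eq with hsT | rfl
  · simp only [runningCondExpWithTerminal, if_pos hsT]
    have hTI : T ∈ Icc 0 T := ⟨hs.1.trans hs.2, le_rfl⟩
    have hK : (fun ω => (χ₁ - χ₂) ω + ∫ r in s..T, (f₁ - f₂) r ω) =ᵐ[μ]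
        (fun ω => χ₁ ω + ∫ r in s..T, f₁ r ω) - fun ω => χ₂ ω + ∫ r in s..T, f₂ r ω := by
      filter_upwards [hf₁.ae_intervalIntegrable_uncurry hs hTI,
        hf₂.ae_intervalIntegrable_uncurry hs hTI] with ω h₁ h₂
      simp only [Pi.sub_apply, intervalIntegral.integral_sub h₁ h₂]
      ring
    exact (condExp_congr_ae hK).trans <| condExp_sub
      (integrable_add_intervalIntegral hχ₁ hf₁ hs) (integrable_add_intervalIntegral hχ₂ hf₂ hs) _
  · simp only [runningCondExpWithTerminal, lt_irrefl, if_false]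
    rfl

end RunningCondExp

theorem supermartingale_decomposition_irregular_terminal_general
    {Ω : Type*} {m : MeasurableSpace Ω} (μ : Measure Ω) [IsProbabilityMeasure μ]
    (T : ℝ) (ℱ : Filtration ℝ m)
    (χ : Ω → ℝ) (hχint : Integrable χ μ)
    (g : Ω → ℝ) (hgmeas : StronglyMeasurable[ℱ T] g) (hgint : Integrable g μ)
    (f : ℝ → Ω → ℝ)
    (hfint : Integrable (Function.uncurry f) ((volume.restrict (Icc 0 T)).prod μ)) :
    ∃ H H' : ℝ → Ω → ℝ,
      IsNonnegSupermartingaleOn μ ℱ T H ∧ IsNonnegSupermartingaleOn μ ℱ T H' ∧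
      ∀ s ∈ Icc (0 : ℝ) T,
        ∀ᵐ ω ∂μ,
          (if s < T then runningCondExp μ ℱ T χ f s ω else g ω) = H s ω - H' s ω := by
  have hfPos : Integrable (uncurry f⁺) ((volume.restrict (Icc 0 T)).prod μ) := hfint.pos_part
  have hfNeg : Integrable (uncurry f⁻) ((volume.restrict (Icc 0 T)).prod μ) := hfint.neg_part
  have hχPos : Integrable (χ⁺ + |g|) μ := hχint.pos_part.add hgint.abs
  have hχNeg : Integrable (χ⁻ + |g|) μ := hχint.neg_part.add hgint.abs
  have hgPos : g⁺ ≤ χ⁺ + |g| := fun ω =>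
    le_add_of_nonneg_of_le (posPart_nonneg _) (max_le (le_abs_self _) (abs_nonneg _))
  have hgNeg : g⁻ ≤ χ⁻ + |g| := fun ω =>
    le_add_of_nonneg_of_le (negPart_nonneg _) (max_le (neg_le_abs _) (abs_nonneg _))
  refine ⟨runningCondExpWithTerminal μ ℱ T (χ⁺ + |g|) f⁺ g⁺,
    runningCondExpWithTerminal μ ℱ T (χ⁻ + |g|) f⁻ g⁻,
    isNonnegSupermartingaleOn_runningCondExpWithTerminal hχPos (fun r ω => posPart_nonneg _)
      hfPos (continuous_posPart.comp_stronglyMeasurable hgmeas) hgint.pos_part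
      (posPart_nonneg g) hgPos,
    isNonnegSupermartingaleOn_runningCondExpWithTerminal hχNeg (fun r ω => negPart_nonneg _)
      hfNeg (continuous_negPart.comp_stronglyMeasurable hgmeas) hgint.neg_part
      (negPart_nonneg g) hgNeg,
    fun s hs => ?_⟩
  have hsplit := runningCondExpWithTerminal_sub (ℱ := ℱ) (g₁ := g⁺) (g₂ := g⁻)
    hχPos hχNeg hfPos hfNeg hs
  rw [add_sub_add_right_eq_sub, posPart_sub_negPart, posPart_sub_negPart,
    posPart_sub_negPart] at hsplit
  filter_upwards [hsplit] with ω hω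
  simpa only [runningCondExpWithTerminal, Pi.sub_apply, apply_ite (fun F : Ω → ℝ => F ω)]
    using hω

/-- Supermartingale decomposition with irregular terminal value: the process
`ξ_s := E[χ + ∫_s^T f_r dr | 𝓕_s]·1_{s<T} + g·1_{s=T}` can be written, for every
`s ∈ [0,T]`, as the a.s. difference of two nonnegative supermartingales. -/
theorem supermartingale_decomposition_irregular_terminal
    {Ω : Type*} {m : MeasurableSpace Ω} (μ : Measure Ω) [IsProbabilityMeasure μ]
    (T : ℝ) (hT : 0 < T) (ℱ : Filtration ℝ m)
    (χ : Ω → ℝ) (hχmeas : StronglyMeasurable[ℱ T] χ) (hχint : Integrable χ μ)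
    (g : Ω → ℝ) (hgmeas : StronglyMeasurable[ℱ T] g) (hgint : Integrable g μ)
    (f : ℝ → Ω → ℝ) (hfmeas : Measurable (Function.uncurry f))
    (hfint : Integrable (Function.uncurry f) ((volume.restrict (Icc 0 T)).prod μ)) :
    ∃ H H' : ℝ → Ω → ℝ,
      IsNonnegSupermartingaleOn μ ℱ T H ∧ IsNonnegSupermartingaleOn μ ℱ T H' ∧
      ∀ s ∈ Icc (0 : ℝ) T,
        ∀ᵐ ω ∂μ,
          (if s < T then runningCondExp μ ℱ T χ f s ω else g ω) = H s ω - H' s ω :=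
  supermartingale_decomposition_irregular_terminal_general μ T ℱ χ hχint g hgmeas hgint f hfint
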